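/- Let p^{(1)},…,p^{(M)} ∈ ℝ^N be vectors with nonnegative entries and let w ∈ ℝ^{NM} be a vector with nonnegative entries arranged in descending order such that the concatenation p^{(1)} ⊕ ⋯ ⊕ p^{(M)} ≺ w. Define the aggregation ε ∈ ℝ^N by ε_k = Σ_{j=1}^M w_{(k−1)M + j} for k = 1,…,N. Then Σ_{i=1}^M p^{(i)} ≺ ε. -/
import Mathlib


open scoped BigOperators ComplexOrder

/-- The descending rearrangement `v↓` of a vector `v ∈ ℝⁿ`. -/
noncomputable def descSort {n : ℕ} (v : Fin n → ℝ) : Fin n → ℝ :=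
  fun i => v (Tuple.sort v i.rev)

/-- The sum of the `k` largest entries of `v`. -/
noncomputable def sumTop {n : ℕ} (v : Fin n → ℝ) (k : ℕ) : ℝ :=
  ∑ i ∈ Finset.univ.filter (fun i : Fin n => (i : ℕ) < k), descSort v i

/-- Majorization `v ≺ w`: for every `k`, the sum of the `k` largest entries of `v` is at
most that of `w`, and the total sums agree. -/
noncomputable def Majorizes {n : ℕ} (v w : Fin n → ℝ) : Prop :=
  (∀ k : ℕ, sumTop v k ≤ sumTop w k) ∧ (∑ i, v i = ∑ i, w i)

/-- Weak majorization `v ≺_w w`: only the partial-sum inequalities are required. -/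
noncomputable def WeakMajorizes {n : ℕ} (v w : Fin n → ℝ) : Prop :=
  ∀ k : ℕ, sumTop v k ≤ sumTop w k

/-- The concatenation `p^{(1)} ⊕ ⋯ ⊕ p^{(M)} ∈ ℝ^{NM}` of `M` vectors in `ℝ^N`,
listing the entries of `p^{(1)}, …, p^{(M)}` in order. -/
def blockConcat {N M : ℕ} (p : Fin M → Fin N → ℝ) : Fin (N * M) → ℝ :=
  fun k =>
    have hN : 0 < N := by
      rcases Nat.eq_zero_or_pos N with h | h
      · exact absurd k.isLt (by simp [h])
      · exact h
    p ⟨(k : ℕ) / N, (Nat.div_lt_iff_lt_mul hN).mpr (Nat.mul_comm N M ▸ k.isLt)⟩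
      ⟨(k : ℕ) % N, Nat.mod_lt _ hN⟩

/-- The aggregation `ε ∈ ℝ^N` of a vector `w ∈ ℝ^{NM}`:
`ε_k = Σ_{j=1}^M w_{(k−1)·M + j}`. -/
def aggregation {N M : ℕ} (w : Fin (N * M) → ℝ) : Fin N → ℝ :=
  fun k => ∑ j : Fin M, w ⟨(k : ℕ) * M + (j : ℕ),
    lt_of_lt_of_le (Nat.add_lt_add_left j.isLt _)
      (by rw [← Nat.succ_mul]; exact Nat.mul_le_mul_right M k.isLt)⟩

section Aux
variable {n : ℕ}

lemma sum_descSort (v : Fin n → ℝ) : ∑ i, descSort v i = ∑ i, v i := by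
  have := Equiv.sum_comp ((Fin.revPerm).trans (Tuple.sort v)) v
  simpa [descSort] using this

lemma antitone_descSort (v : Fin n → ℝ) : Antitone (descSort v) := by
  intro i j hij
  exact Tuple.monotone_sort v (Fin.rev_le_rev.mpr hij)

lemma descSort_nonneg {v : Fin n → ℝ} (h : ∀ i, 0 ≤ v i) (i : Fin n) : 0 ≤ descSort v i :=
  h _

lemma descSort_of_antitone {v : Fin n → ℝ} (h : Antitone v) : descSort v = v := by
  have hmono : Monotone (v ∘ (Fin.revPerm : Equiv.Perm (Fin n))) := by
    intro a b hab
    exact h (Fin.rev_le_rev.mpr hab)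
  have heq := (Tuple.comp_sort_eq_comp_iff_monotone (f := v)
    (σ := (Fin.revPerm : Equiv.Perm (Fin n)))).mpr hmono
  funext i
  have := congrFun heq.symm i.rev
  simpa [descSort, Fin.rev_rev] using this

lemma filter_lt_eq_image {s : ℕ} (h : s ≤ n) :
    (Finset.univ.filter fun i : Fin n => (i : ℕ) < s) =
      Finset.image (Fin.castLE h) Finset.univ := by
  ext i
  simp only [Finset.mem_filter, Finset.mem_univ, true_and, Finset.mem_image]
  constructor
  · intro hi
    exact ⟨⟨(i : ℕ), hi⟩, rfl⟩
  · rintro ⟨j, rfl⟩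
    exact j.isLt

lemma card_filter_lt {s : ℕ} (h : s ≤ n) :
    (Finset.univ.filter fun i : Fin n => (i : ℕ) < s).card = s := by
  rw [filter_lt_eq_image h,
    Finset.card_image_of_injective _ (Fin.castLE_injective h)]
  simp

lemma sumTop_min (v : Fin n → ℝ) (k : ℕ) : sumTop v k = sumTop v (min k n) := by
  unfold sumTop
  congr 1
  apply Finset.filter_congr
  intro i _
  simp [Nat.lt_min, i.isLt]

lemma sumTop_of_le (v : Fin n → ℝ) {k : ℕ} (h : n ≤ k) : sumTop v k = ∑ i, v i := by
  unfold sumTop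
  rw [Finset.filter_true_of_mem (fun i _ => lt_of_lt_of_le i.isLt h)]
  exact sum_descSort v

lemma sumTop_of_antitone {v : Fin n → ℝ} (h : Antitone v) (k : ℕ) :
    sumTop v k = ∑ i ∈ Finset.univ.filter (fun i : Fin n => (i : ℕ) < k), v i := by
  unfold sumTop
  rw [descSort_of_antitone h]

lemma sum_le_sum_filter_lt {g : Fin n → ℝ} (hg : Antitone g) (hg0 : ∀ i, 0 ≤ g i)
    (S : Finset (Fin n)) {k : ℕ} (hk : S.card ≤ k) :
    ∑ i ∈ S, g i ≤ ∑ i ∈ Finset.univ.filter (fun i : Fin n => (i : ℕ) < k), g i := by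
  classical
  set F := Finset.univ.filter (fun i : Fin n => (i : ℕ) < k) with hF
  have hmemF : ∀ i : Fin n, i ∈ F ↔ (i : ℕ) < k := by
    intro i; simp [hF]
  have hcardF : S.card ≤ F.card := by
    rcases le_total k n with h | h
    · rw [hF, card_filter_lt h]; exact hk
    · have hFuniv : F = Finset.univ := by
        ext i; simp [hF, lt_of_lt_of_le i.isLt h]
      rw [hFuniv]; exact Finset.card_le_univ S
  have hdiff : (S \ F).card ≤ (F \ S).card := by
    have h1 := Finset.card_sdiff_add_card_inter S F
    have h2 := Finset.card_sdiff_add_card_inter F S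
    have h3 : (S ∩ F).card = (F ∩ S).card := by rw [Finset.inter_comm]
    omega
  obtain ⟨t, htsub, htcard⟩ := Finset.exists_subset_card_eq hdiff
  rcases Finset.eq_empty_or_nonempty (S \ F) with hA | hA
  · have hSF : S ⊆ F := by
      intro x hx
      by_contra hxF
      exact (Finset.eq_empty_iff_forall_notMem.mp hA x) (Finset.mem_sdiff.mpr ⟨hx, hxF⟩)
    exact Finset.sum_le_sum_of_subset_of_nonneg hSF (fun i _ _ => hg0 i)
  · have htne : t.Nonempty := by
      rw [← Finset.card_pos, htcard, Finset.card_pos]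
      exact hA
    obtain ⟨z, hzt, hzmax⟩ := t.exists_max_image id htne
    have hzF : z ∈ F := (Finset.mem_sdiff.mp (htsub hzt)).1
    have hzk : (z : ℕ) < k := (hmemF z).mp hzF
    have hstep : ∑ x ∈ S \ F, g x ≤ ∑ x ∈ t, g x := by
      calc ∑ x ∈ S \ F, g x ≤ (S \ F).card • g z := by
            apply Finset.sum_le_card_nsmul
            intro x hx
            apply hg
            have hxk : ¬ (x : ℕ) < k := fun hc =>
              (Finset.mem_sdiff.mp hx).2 ((hmemF x).mpr hc)
            exact Fin.le_def.mpr (by omega)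
        _ = t.card • g z := by rw [htcard]
        _ ≤ ∑ x ∈ t, g x := Finset.card_nsmul_le_sum t g _ (fun y hy => hg (hzmax y hy))
    have hdisj : Disjoint (S ∩ F) t := by
      rw [Finset.disjoint_left]
      intro x hx hxt
      exact (Finset.mem_sdiff.mp (htsub hxt)).2 (Finset.mem_inter.mp hx).1
    have hsub : (S ∩ F) ∪ t ⊆ F := by
      intro x hx
      rcases Finset.mem_union.mp hx with h | h
      · exact (Finset.mem_inter.mp h).2
      · exact (Finset.mem_sdiff.mp (htsub h)).1
    calc ∑ i ∈ S, g i
        = ∑ x ∈ S ∩ F, g x + ∑ x ∈ S \ F, g x := by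
          rw [add_comm, ← Finset.sum_union (Finset.disjoint_sdiff_inter S F),
            Finset.sdiff_union_inter]
      _ ≤ ∑ x ∈ S ∩ F, g x + ∑ x ∈ t, g x := by linarith
      _ = ∑ x ∈ (S ∩ F) ∪ t, g x := (Finset.sum_union hdisj).symm
      _ ≤ ∑ x ∈ F, g x := Finset.sum_le_sum_of_subset_of_nonneg hsub (fun i _ _ => hg0 i)
end Aux

lemma sum_le_sumTop {n : ℕ} {v : Fin n → ℝ} (h0 : ∀ i, 0 ≤ v i) (S : Finset (Fin n)) {k : ℕ}
    (hk : S.card ≤ k) : ∑ i ∈ S, v i ≤ sumTop v k := by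
  classical
  set e : Fin n → Fin n := fun i => ((Tuple.sort v)⁻¹ i).rev with he
  have hinj : Function.Injective e := by
    intro a b hab
    have := Fin.rev_injective hab
    exact (Tuple.sort v)⁻¹.injective this
  have hval : ∀ i, descSort v (e i) = v i := by
    intro i
    simp [descSort, he, Fin.rev_rev]
  calc ∑ i ∈ S, v i = ∑ i ∈ S, descSort v (e i) := by
        refine Finset.sum_congr rfl fun i _ => (hval i).symm
    _ = ∑ j ∈ S.image e, descSort v j := (Finset.sum_image (fun a _ b _ h => hinj h)).symm
    _ ≤ sumTop v k := by
        rw [sumTop]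
        refine sum_le_sum_filter_lt (antitone_descSort v) (descSort_nonneg h0) _ ?_
        rw [Finset.card_image_of_injective _ hinj]
        exact hk


section Blocks
variable {N M : ℕ}

lemma pair_lt_mul {a j s : ℕ} (ha : a < s) (hj : j < M) : a * M + j < s * M := by
  have h1 : a * M + j < (a + 1) * M := by rw [Nat.succ_mul]; omega
  exact lt_of_lt_of_le h1 (Nat.mul_le_mul_right M ha)

lemma antitone_aggregation (w : Fin (N * M) → ℝ) (hw : Antitone w) :
    Antitone (aggregation w) := by
  intro a b hab
  apply Finset.sum_le_sum
  intro j _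
  apply hw
  rw [Fin.le_def]
  have : (a : ℕ) ≤ b := hab
  simp only
  have := Nat.mul_le_mul_right M this
  omega

/-- block sums of `w` over the first `s` blocks equal the first `s*M` entries of `w`. -/
lemma sum_aggregation_filter (w : Fin (N * M) → ℝ) {s : ℕ} (hs : s ≤ N) (hM : 0 < M) :
    ∑ i ∈ Finset.univ.filter (fun i : Fin N => (i : ℕ) < s), aggregation w i
      = ∑ t ∈ Finset.univ.filter (fun t : Fin (N * M) => (t : ℕ) < s * M), w t := by
  classical
  unfold aggregation
  rw [← Finset.sum_product']
  refine Finset.sum_nbij'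
    (i := fun x : Fin N × Fin M => (⟨(x.1 : ℕ) * M + (x.2 : ℕ),
      lt_of_lt_of_le (pair_lt_mul x.1.isLt x.2.isLt) le_rfl⟩ : Fin (N * M)))
    (j := fun t : Fin (N * M) => ((⟨(t : ℕ) / M, (Nat.div_lt_iff_lt_mul hM).mpr t.isLt⟩ : Fin N),
      (⟨(t : ℕ) % M, Nat.mod_lt _ hM⟩ : Fin M)))
    ?_ ?_ ?_ ?_ ?_
  · rintro ⟨a, j⟩ hx
    simp only [Finset.mem_filter, Finset.mem_product, Finset.mem_univ, true_and, and_true] at hx ⊢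
    exact pair_lt_mul hx j.isLt
  · intro t ht
    simp only [Finset.mem_filter, Finset.mem_univ, true_and, Finset.mem_product, and_true] at ht ⊢
    exact (Nat.div_lt_iff_lt_mul hM).mpr ht
  · rintro ⟨a, j⟩ hx
    have hdiv : ((a : ℕ) * M + (j : ℕ)) / M = a := by
      rw [add_comm, Nat.add_mul_div_right _ _ hM, Nat.div_eq_of_lt j.isLt, Nat.zero_add]
    have hmod : ((a : ℕ) * M + (j : ℕ)) % M = j := by
      rw [Nat.mul_add_mod', Nat.mod_eq_of_lt j.isLt]
    exact Prod.ext (Fin.ext hdiv) (Fin.ext hmod)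
  · intro t ht
    exact Fin.ext (by simp [Nat.div_add_mod'])
  · rintro ⟨a, j⟩ hx
    rfl
end Blocks

section Main
variable {N M : ℕ}

lemma pair_lt_mul' {a i : ℕ} (ha : a < N) (hi : i < M) : N * i + a < N * M := by
  have h1 : N * i + a < N * (i + 1) := by rw [Nat.mul_succ]; omega
  exact lt_of_lt_of_le h1 (Nat.mul_le_mul_left N hi)

lemma blockConcat_mk (p : Fin M → Fin N → ℝ) (a : Fin N) (i : Fin M)
    (h : N * (i : ℕ) + (a : ℕ) < N * M) :
    blockConcat p ⟨N * (i : ℕ) + (a : ℕ), h⟩ = p i a := by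
  have hN : 0 < N := a.pos
  have hdiv : (N * (i : ℕ) + (a : ℕ)) / N = i := by
    rw [Nat.mul_add_div hN, Nat.div_eq_of_lt a.isLt, Nat.add_zero]
  have hmod : (N * (i : ℕ) + (a : ℕ)) % N = a := by
    rw [Nat.mul_add_mod, Nat.mod_eq_of_lt a.isLt]
  have key : ∀ (x : Fin M) (y : Fin N), x = i → y = a → p x y = p i a := by
    rintro x y rfl rfl; rfl
  exact key _ _ (Fin.ext hdiv) (Fin.ext hmod)

lemma sum_blockConcat_subset (p : Fin M → Fin N → ℝ) (T : Finset (Fin N)) :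
    ∃ B : Finset (Fin (N * M)), B.card = T.card * M ∧
      ∑ t ∈ B, blockConcat p t = ∑ a ∈ T, ∑ i : Fin M, p i a := by
  classical
  set g : Fin N × Fin M → Fin (N * M) :=
    fun x => ⟨N * (x.2 : ℕ) + (x.1 : ℕ), pair_lt_mul' x.1.isLt x.2.isLt⟩ with hg
  have hginj : Function.Injective g := by
    intro x y hxy
    have h : N * (x.2 : ℕ) + (x.1 : ℕ) = N * (y.2 : ℕ) + (y.1 : ℕ) := congrArg Fin.val hxy
    have hx := x.1.isLt
    have hy := y.1.isLt
    have e1 : (x.1 : ℕ) = y.1 := by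
      have h1 : (N * (x.2 : ℕ) + (x.1 : ℕ)) % N = (N * (y.2 : ℕ) + (y.1 : ℕ)) % N := by rw [h]
      rwa [Nat.mul_add_mod, Nat.mul_add_mod, Nat.mod_eq_of_lt hx, Nat.mod_eq_of_lt hy] at h1
    have e2 : (x.2 : ℕ) = y.2 := by
      have hN : 0 < N := x.1.pos
      have h2 : N * (x.2 : ℕ) = N * (y.2 : ℕ) := by omega
      exact Nat.eq_of_mul_eq_mul_left hN h2
    exact Prod.ext (Fin.ext e1) (Fin.ext e2)
  refine ⟨(T ×ˢ Finset.univ).image g, ?_, ?_⟩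
  · rw [Finset.card_image_of_injective _ hginj, Finset.card_product, Finset.card_univ,
      Fintype.card_fin]
  · rw [Finset.sum_image (fun a _ b _ h => hginj h), ← Finset.sum_product']
    exact Finset.sum_congr rfl fun x _ => blockConcat_mk p x.1 x.2 _


/-- Let `p^{(1)}, …, p^{(M)} ∈ ℝ^N` be nonnegative vectors and let
`w ∈ ℝ^{NM}` be nonnegative with entries in descending order, such that
`p^{(1)} ⊕ ⋯ ⊕ p^{(M)} ≺ w`.  Then `Σ_i p^{(i)} ≺ ε`, where `ε` is the aggregation of `w`. -/
theorem majorizes_aggregation {N M : ℕ} (p : Fin M → Fin N → ℝ) (w : Fin (N * M) → ℝ)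
    (hp : ∀ i a, 0 ≤ p i a) (hw0 : ∀ k, 0 ≤ w k) (hw : Antitone w)
    (hmaj : Majorizes (blockConcat p) w) :
    Majorizes (fun a => ∑ i, p i a) (aggregation w) := by
    classical
  rcases Nat.eq_zero_or_pos N with hN0 | hN
  · subst hN0
    exact ⟨fun k => by simp [sumTop], by simp⟩
  rcases Nat.eq_zero_or_pos M with hM0 | hM
  · subst hM0
    constructor
    · intro k
      have h1 : (fun a : Fin N => ∑ i : Fin 0, p i a) = fun _ => (0 : ℝ) := by
        funext a; simp
      have h2 : aggregation w = fun _ : Fin N => (0 : ℝ) := by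
        funext a; simp [aggregation]
      rw [h1, h2]
    · simp [aggregation]
  have hbc0 : ∀ t, 0 ≤ blockConcat p t := fun t => hp _ _
  have hεa : Antitone (aggregation w) := antitone_aggregation w hw
  constructor
  · intro k
    set k' := min k N with hk'
    have hk'N : k' ≤ N := min_le_right _ _
    rw [sumTop_min (fun a => ∑ i, p i a) k, sumTop_min (aggregation w) k, ← hk']
    have hR : sumTop (aggregation w) k' = sumTop w (k' * M) := by
      rw [sumTop_of_antitone hεa, sumTop_of_antitone hw, sum_aggregation_filter w hk'N hM]
    rw [hR]
    set q : Fin N → ℝ := fun a => ∑ i, p i a with hq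
    have hinj2 : Function.Injective (fun j : Fin N => Tuple.sort q j.rev) := by
      intro a b hab
      exact Fin.rev_injective ((Tuple.sort q).injective hab)
    set T : Finset (Fin N) :=
      (Finset.univ.filter (fun i : Fin N => (i : ℕ) < k')).image
        (fun j => Tuple.sort q j.rev) with hT
    have hTcard : T.card = k' := by
      rw [hT, Finset.card_image_of_injective _ hinj2, card_filter_lt hk'N]
    have hL : sumTop q k' = ∑ a ∈ T, q a := by
      rw [hT, Finset.sum_image (fun a _ b _ h => hinj2 h)]
      simp only [sumTop, descSort]
    obtain ⟨B, hBcard, hBsum⟩ := sum_blockConcat_subset p T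
    calc sumTop q k' = ∑ a ∈ T, q a := hL
      _ = ∑ t ∈ B, blockConcat p t := hBsum.symm
      _ ≤ sumTop (blockConcat p) (k' * M) := by
          refine sum_le_sumTop hbc0 B ?_
          rw [hBcard, hTcard]
      _ ≤ sumTop w (k' * M) := hmaj.1 _
  · have h1 : ∑ a, (∑ i, p i a) = ∑ t, blockConcat p t := by
      obtain ⟨B, hBcard, hBsum⟩ := sum_blockConcat_subset p Finset.univ
      have hBuniv : B = Finset.univ := by
        apply Finset.eq_univ_of_card
        rw [hBcard, Finset.card_univ, Fintype.card_fin, Fintype.card_fin]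
      rw [hBuniv] at hBsum
      exact hBsum.symm
    have h2 : ∑ i, aggregation w i = ∑ t, w t := by
      have h := sum_aggregation_filter (N := N) w (le_refl N) hM
      rwa [Finset.filter_true_of_mem (fun i _ => i.isLt),
        Finset.filter_true_of_mem (fun t _ => t.isLt)] at h
    rw [h1, hmaj.2, ← h2]

end Main
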